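/- For the tree frames over a countably infinite alphabet (with 0 not in the alphabet): Log(N_ω(F_in)) = D, Log(N_ω(F_rn)) = T, Log(N_ω(F_it)) = D4, and Log(N_ω(F_rt)) = S4. -/

import Mathlib

set_option autoImplicit false

/-- Modal formulas with `n` modalities (propositional letters indexed by `ℕ`). -/
inductive MFormula (n : ℕ) : Type
  | prop : ℕ → MFormula n
  | bot  : MFormula n
  | imp  : MFormula n → MFormula n → MFormula n
  | box  : Fin n → MFormula n → MFormula n

namespace MFormula

/-- Negation as an abbreviation: ¬φ := φ → ⊥. -/
def neg {n : ℕ} (φ : MFormula n) : MFormula n := φ.imp .bot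

/-- Uniform substitution of formulas for propositional letters. -/
def subst {n : ℕ} (s : ℕ → MFormula n) : MFormula n → MFormula n
  | prop p  => s p
  | bot     => bot
  | imp φ ψ => imp (φ.subst s) (ψ.subst s)
  | box i φ => box i (φ.subst s)

end MFormula

/-- A classical tautology: true under every boolean valuation of formulas
(a valuation respecting `⊥` and `→`, arbitrary on letters and boxed formulas). -/
def IsTautology {n : ℕ} (φ : MFormula n) : Prop :=
  ∀ v : MFormula n → Prop,
    ¬ v .bot → (∀ ψ χ : MFormula n, v (ψ.imp χ) ↔ (v ψ → v χ)) → v φ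

/-- Normal modal logics with `n` modalities. -/
structure IsNormalLogic {n : ℕ} (L : Set (MFormula n)) : Prop where
  taut : ∀ φ : MFormula n, IsTautology φ → φ ∈ L
  kax : ∀ (i : Fin n) (p q : MFormula n),
    ((MFormula.box i (p.imp q)).imp ((MFormula.box i p).imp (MFormula.box i q))) ∈ L
  mp : ∀ φ ψ : MFormula n, φ.imp ψ ∈ L → φ ∈ L → ψ ∈ L
  subst : ∀ (φ : MFormula n) (s : ℕ → MFormula n), φ ∈ L → φ.subst s ∈ L
  nec : ∀ (i : Fin n) (φ : MFormula n), φ ∈ L → MFormula.box i φ ∈ L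

/-- The smallest normal logic containing `Γ`. -/
def NormalClosure {n : ℕ} (Γ : Set (MFormula n)) : Set (MFormula n) :=
  ⋂₀ {L : Set (MFormula n) | IsNormalLogic L ∧ Γ ⊆ L}

/-- The axiom □p → ¬□¬p. -/
def dAx : MFormula 1 :=
  (MFormula.box 0 (.prop 0)).imp (MFormula.neg (MFormula.box 0 (MFormula.neg (.prop 0))))

/-- The axiom □p → p. -/
def tAx : MFormula 1 := (MFormula.box 0 (.prop 0)).imp (.prop 0)

/-- The axiom □p → □□p. -/
def fourAx : MFormula 1 :=
  (MFormula.box 0 (.prop 0)).imp (MFormula.box 0 (MFormula.box 0 (.prop 0)))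

def LogicK : Set (MFormula 1) := NormalClosure ∅
def LogicD : Set (MFormula 1) := NormalClosure (LogicK ∪ {dAx})
def LogicT : Set (MFormula 1) := NormalClosure (LogicK ∪ {tAx})
def LogicD4 : Set (MFormula 1) := NormalClosure (LogicD ∪ {fourAx})
def LogicS4 : Set (MFormula 1) := NormalClosure (LogicT ∪ {fourAx})

/-- Translation of a unimodal formula into the bimodal language, replacing □ by □_i. -/
def trTo (i : Fin 2) : MFormula 1 → MFormula 2
  | .prop p  => .prop p
  | .bot     => .bot
  | .imp φ ψ => .imp (trTo i φ) (trTo i ψ)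
  | .box _ φ => .box i (trTo i φ)

/-- The fusion `L₁ ⊗ L₂` of two unimodal logics: the smallest bimodal normal logic
containing the translation of `L₁` (□ ↦ □₁) and of `L₂` (□ ↦ □₂). -/
def Fusion (L₁ L₂ : Set (MFormula 1)) : Set (MFormula 2) :=
  NormalClosure (trTo 0 '' L₁ ∪ trTo 1 '' L₂)

/-- Truth in a Kripke model. -/
def kSat {n : ℕ} {W : Type} (R : Fin n → W → W → Prop) (V : ℕ → Set W) :
    W → MFormula n → Prop
  | w, .prop p  => w ∈ V p
  | _, .bot     => False
  | w, .imp φ ψ => kSat R V w φ → kSat R V w ψ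
  | w, .box i φ => ∀ v : W, R i w v → kSat R V v φ

/-- The logic of a Kripke `n`-frame. -/
def KLogn {n : ℕ} {W : Type} [Nonempty W] (R : Fin n → W → W → Prop) :
    Set (MFormula n) :=
  {φ | ∀ (V : ℕ → Set W) (w : W), kSat R V w φ}

/-- The logic of a unimodal Kripke frame. -/
def KLog {W : Type} [Nonempty W] (R : W → W → Prop) : Set (MFormula 1) :=
  KLogn (fun _ => R)

/-- The logic of a bimodal Kripke frame. -/
def KLog2 {W : Type} [Nonempty W] (R₁ R₂ : W → W → Prop) : Set (MFormula 2) :=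
  KLogn ![R₁, R₂]

/-- Truth in a (monotone) neighborhood model: `x ⊨ □_i φ` iff the truth set of `φ`
belongs to the filter `τ i x`. -/
def nSat {n : ℕ} {X : Type} (τ : Fin n → X → Filter X) (V : ℕ → Set X) :
    X → MFormula n → Prop
  | x, .prop p  => x ∈ V p
  | _, .bot     => False
  | x, .imp φ ψ => nSat τ V x φ → nSat τ V x ψ
  | x, .box i φ => {y | nSat τ V y φ} ∈ τ i x

/-- The logic of a neighborhood `n`-frame. -/
def NLogn {n : ℕ} {X : Type} [Nonempty X] (τ : Fin n → X → Filter X) :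
    Set (MFormula n) :=
  {φ | ∀ (V : ℕ → Set X) (x : X), nSat τ V x φ}

/-- The logic of a unimodal neighborhood frame. -/
def NLog {X : Type} [Nonempty X] (τ : X → Filter X) : Set (MFormula 1) :=
  NLogn (fun _ => τ)

/-- The logic of a neighborhood 2-frame. -/
def NLog2 {X : Type} [Nonempty X] (τ₁ τ₂ : X → Filter X) : Set (MFormula 2) :=
  NLogn ![τ₁, τ₂]

/-- Validity of a unimodal formula in a neighborhood frame. -/
def NValid {X : Type} (τ : X → Filter X) (φ : MFormula 1) : Prop :=
  ∀ (V : ℕ → Set X) (x : X), nSat (fun _ => τ) V x φ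

/-- The neighborhood frame `N(F)` of a Kripke frame `F = (W, R)`:
`τ(w)` is the principal filter of `R(w)`. -/
def nOfK {W : Type} (R : W → W → Prop) (w : W) : Filter W :=
  Filter.principal {v | R w v}

/-- Bounded morphisms between neighborhood frames (with neighborhood functions
indexed by `ι`). -/
def IsNdMorphism {ι X Y : Type} (τ : ι → X → Filter X) (σ : ι → Y → Filter Y)
    (f : X → Y) : Prop :=
  Function.Surjective f ∧
    ∀ (i : ι) (x : X),
      (∀ U ∈ τ i x, f '' U ∈ σ i (f x)) ∧
      (∀ V ∈ σ i (f x), ∃ U ∈ τ i x, f '' U ⊆ V)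

/-- First neighborhood function of the product of two neighborhood frames:
`U ∈ τ'_1(x₁,x₂)` iff `∃ V ∈ τ₁ x₁, V × {x₂} ⊆ U`. -/
def prodTau1 {X₁ X₂ : Type} (τ₁ : X₁ → Filter X₁) (p : X₁ × X₂) :
    Filter (X₁ × X₂) :=
  (τ₁ p.1).map (fun x => (x, p.2))

/-- Second neighborhood function of the product of two neighborhood frames:
`U ∈ τ'_2(x₁,x₂)` iff `∃ V ∈ τ₂ x₂, {x₁} × V ⊆ U`. -/
def prodTau2 {X₁ X₂ : Type} (τ₂ : X₂ → Filter X₂) (p : X₁ × X₂) :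
    Filter (X₁ × X₂) :=
  (τ₂ p.2).map (fun y => (p.1, y))

/-- The successor relation on finite sequences: `a R b` iff `b = a·x` for some `x ∈ A`. -/
def sucRel (A : Type) (a b : List A) : Prop := ∃ x : A, b = a ++ [x]

/-- The four kinds of tree frames: irreflexive/reflexive, non-transitive/transitive. -/
inductive TreeKind : Type
  | inn  -- irreflexive non-transitive: F_in
  | rn   -- reflexive non-transitive: F_rn (reflexive closure)
  | itr  -- irreflexive transitive: F_it (transitive closure)
  | rt   -- reflexive transitive: F_rt (reflexive-transitive closure)

/-- The relation of the tree frame `F_{ξη}[A]` on `A*`. -/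
def treeRel (A : Type) : TreeKind → List A → List A → Prop
  | .inn => sucRel A
  | .rn  => fun a b => a = b ∨ sucRel A a b
  | .itr => Relation.TransGen (sucRel A)
  | .rt  => Relation.ReflTransGen (sucRel A)

/-- First relation of the product frame `F₁ ⊗ F₂` on `(A ⊔ B)*`:
`x R'_1 y` iff `y = x·z` for some `z ∈ A*` with `Λ R₁ z`. -/
def prodRel1 (A B : Type) (k : TreeKind) (x y : List (A ⊕ B)) : Prop :=
  ∃ z : List A, treeRel A k [] z ∧ y = x ++ z.map Sum.inl

/-- Second relation of the product frame `F₁ ⊗ F₂` on `(A ⊔ B)*`. -/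
def prodRel2 (A B : Type) (k : TreeKind) (x y : List (A ⊕ B)) : Prop :=
  ∃ z : List B, treeRel B k [] z ∧ y = x ++ z.map Sum.inr

/-- Pseudo-infinite sequences over `A ∪ {0}` (with `0` modelled by `none`, so
automatically `0 ∉ A`) that are eventually `0`. -/
def PSeq (A : Type) : Type :=
  {α : ℕ → Option A // ∃ N, ∀ k ≥ N, α k = none}

instance {A : Type} : Nonempty (PSeq A) := ⟨⟨fun _ => none, 0, fun _ _ => rfl⟩⟩

/-- `st(α)`: the least `N` such that `α` has only zeros from position `N` on. -/
noncomputable def PSeq.st {A : Type} (α : PSeq A) : ℕ :=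
  sInf {N | ∀ k ≥ N, α.1 k = none}

/-- `f_F(α)`: the finite sequence obtained from `α` by deleting all zeros. -/
noncomputable def PSeq.forget {A : Type} (α : PSeq A) : List A :=
  ((List.range α.st).map α.1).reduceOption

/-- The basic neighborhood `U_k(α)` of `α`, relative to the relation `R` on `A*`:
`{β ∈ X : α|_m = β|_m and f_F(α) R f_F(β)}` where `m = max(k, st(α))`. -/
def Unbhd {A : Type} (R : List A → List A → Prop) (k : ℕ) (α : PSeq A) :
    Set (PSeq A) :=
  {β | (∀ i < max k α.st, α.1 i = β.1 i) ∧ R α.forget β.forget}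

/-- The neighborhood function of `N_ω(F)`: `τ(α)` is the filter generated by the
base `{U_k(α) : k ∈ ℕ}`. -/
noncomputable def nOmega {A : Type} (R : List A → List A → Prop) (α : PSeq A) :
    Filter (PSeq A) :=
  ⨅ k : ℕ, Filter.principal (Unbhd R k α)

/-- The interleaving `x₁ y₁ x₂ y₂ …` of two pseudo-infinite sequences. -/
def interleave {A B : Type} (α : PSeq A) (β : PSeq B) : PSeq (A ⊕ B) :=
  ⟨fun n => if n % 2 = 0 then (α.1 (n / 2)).map Sum.inl
            else (β.1 (n / 2)).map Sum.inr, by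
    obtain ⟨N₁, h₁⟩ := α.2
    obtain ⟨N₂, h₂⟩ := β.2
    refine ⟨2 * max N₁ N₂, fun k hk => ?_⟩
    have hdiv : max N₁ N₂ ≤ k / 2 := by omega
    by_cases h : k % 2 = 0
    · simp [h, h₁ (k / 2) (le_trans (le_max_left _ _) hdiv)]
    · simp [h, h₂ (k / 2) (le_trans (le_max_right _ _) hdiv)]⟩

/-- The map `g`: delete all zeros from the interleaving of `α` and `β`. -/
noncomputable def gMap {A B : Type} (p : PSeq A × PSeq B) : List (A ⊕ B) :=
  (interleave p.1 p.2).forget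

/-! Soundness: every basic neighbourhood `U_k(α)` is nonempty; it contains `α` when the tree
relation is reflexive; and when the relation is transitive, every `β ∈ U_k(α)` satisfies
`U_{max k st(α)}(β) ⊆ U_k(α)`. So D, T and 4 are valid in the corresponding frames `N_ω(F)`.

Completeness: every successor of `f_F(α)` extends it, so it is `f_F(β)` for some `β` in each
`U_k(α)`; thus `f_F` is a bounded morphism from `N_ω(F)` onto the Kripke frame `F`, and
`Log(N_ω(F)) ⊆ Log(F)`. A formula outside the logic is refuted at the root of an `A`-branching
tree of maximal consistent sets, which is a model based on `F`: as `A` is infinite, each node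
has a child for every formula `□ψ` that it has to refute. -/

open MFormula

section NormalClosure

variable {n : ℕ}

lemma subset_normalClosure (Γ : Set (MFormula n)) : Γ ⊆ NormalClosure Γ :=
  fun _ hφ => Set.mem_sInter.2 fun _ hL => hL.2 hφ

lemma normalClosure_subset {Γ L : Set (MFormula n)} (hL : IsNormalLogic L) (hΓ : Γ ⊆ L) :
    NormalClosure Γ ⊆ L :=
  fun _ hφ => Set.mem_sInter.1 hφ L ⟨hL, hΓ⟩

lemma isNormalLogic_normalClosure (Γ : Set (MFormula n)) : IsNormalLogic (NormalClosure Γ) where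
  taut φ h := Set.mem_sInter.2 fun _ hL => hL.1.taut φ h
  kax i p q := Set.mem_sInter.2 fun _ hL => hL.1.kax i p q
  mp φ ψ h₁ h₂ := Set.mem_sInter.2 fun L hL =>
    hL.1.mp φ ψ (Set.mem_sInter.1 h₁ L hL) (Set.mem_sInter.1 h₂ L hL)
  subst φ s h := Set.mem_sInter.2 fun L hL => hL.1.subst φ s (Set.mem_sInter.1 h L hL)
  nec i φ h := Set.mem_sInter.2 fun L hL => hL.1.nec i φ (Set.mem_sInter.1 h L hL)

lemma normalClosure_union_singleton_subset {Γ L : Set (MFormula n)} {φ : MFormula n}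
    (hL : IsNormalLogic L) (hΓ : Γ ⊆ L) (hφ : φ ∈ L) : NormalClosure (Γ ∪ {φ}) ⊆ L :=
  normalClosure_subset hL (Set.union_subset hΓ (Set.singleton_subset_iff.2 hφ))

lemma logicK_subset {L : Set (MFormula 1)} (hL : IsNormalLogic L) : LogicK ⊆ L :=
  normalClosure_subset hL (Set.empty_subset L)

lemma dAx_mem_logicD : dAx ∈ LogicD := subset_normalClosure _ (Or.inr rfl)

lemma tAx_mem_logicT : tAx ∈ LogicT := subset_normalClosure _ (Or.inr rfl)

lemma dAx_mem_logicD4 : dAx ∈ LogicD4 := subset_normalClosure _ (Or.inl dAx_mem_logicD)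

lemma fourAx_mem_logicD4 : fourAx ∈ LogicD4 := subset_normalClosure _ (Or.inr rfl)

lemma tAx_mem_logicS4 : tAx ∈ LogicS4 := subset_normalClosure _ (Or.inl tAx_mem_logicT)

lemma fourAx_mem_logicS4 : fourAx ∈ LogicS4 := subset_normalClosure _ (Or.inr rfl)

end NormalClosure

section NormalLogic

variable {n : ℕ} {L : Set (MFormula n)}

lemma foldr_imp_iff {v : MFormula n → Prop} (himp : ∀ ψ χ, v (ψ.imp χ) ↔ (v ψ → v χ))
    (l : List (MFormula n)) (ψ : MFormula n) :
    v (l.foldr imp ψ) ↔ ((∀ x ∈ l, v x) → v ψ) := by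
  induction l with
  | nil => simp
  | cons a t ih => simp only [List.foldr_cons, himp, ih, List.forall_mem_cons]; tauto

namespace IsNormalLogic

variable (hL : IsNormalLogic L)
include hL

lemma mem_of_tautology {φ ψ : MFormula n} (h : φ ∈ L)
    (hsem : ∀ v : MFormula n → Prop, ¬ v bot → (∀ ψ χ, v (ψ.imp χ) ↔ (v ψ → v χ)) →
      v φ → v ψ) : ψ ∈ L :=
  hL.mp _ _ (hL.taut _ fun v hbot himp => (himp _ _).2 (hsem v hbot himp)) h

lemma mem_of_tautology₂ {φ₁ φ₂ ψ : MFormula n} (h₁ : φ₁ ∈ L) (h₂ : φ₂ ∈ L)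
    (hsem : ∀ v : MFormula n → Prop, ¬ v bot → (∀ ψ χ, v (ψ.imp χ) ↔ (v ψ → v χ)) →
      v φ₁ → v φ₂ → v ψ) : ψ ∈ L :=
  hL.mp _ _ (hL.mem_of_tautology h₁ fun v hbot himp h => (himp _ _).2 (hsem v hbot himp h)) h₂

lemma box_foldr_imp_mem (i : Fin n) (l : List (MFormula n)) (ψ : MFormula n) :
    (box i (l.foldr imp ψ)).imp ((l.map (box i)).foldr imp (box i ψ)) ∈ L := by
  induction l with
  | nil => exact hL.taut _ fun v _ himp => (himp _ _).2 id
  | cons a t ih =>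
    refine hL.mem_of_tautology₂ (hL.kax i a (t.foldr imp ψ)) ih fun v _ himp => ?_
    simp only [List.map_cons, List.foldr_cons, himp]
    tauto

end IsNormalLogic

def Derives (L Γ : Set (MFormula n)) (φ : MFormula n) : Prop :=
  ∃ l : List (MFormula n), (∀ x ∈ l, x ∈ Γ) ∧ l.foldr imp φ ∈ L

def Consistent (L Γ : Set (MFormula n)) : Prop := ¬ Derives L Γ bot

structure IsMCS (L w : Set (MFormula n)) : Prop where
  consistent : Consistent L w
  mem_or_neg_mem : ∀ φ, φ ∈ w ∨ φ.neg ∈ w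

def boxInv (i : Fin n) (w : Set (MFormula n)) : Set (MFormula n) := {χ | box i χ ∈ w}

namespace Derives

variable {Γ Δ : Set (MFormula n)} {φ ψ : MFormula n}

lemma of_mem_logic (h : φ ∈ L) : Derives L Γ φ := ⟨[], by simp, h⟩

lemma of_mem (hL : IsNormalLogic L) (h : φ ∈ Γ) : Derives L Γ φ :=
  ⟨[φ], by simpa, hL.taut _ fun _ _ himp => (himp _ _).2 id⟩

lemma mono (h : Derives L Γ φ) (hΓ : Γ ⊆ Δ) : Derives L Δ φ :=
  let ⟨l, hl, hφ⟩ := h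
  ⟨l, fun x hx => hΓ (hl x hx), hφ⟩

lemma mp (hL : IsNormalLogic L) (h₁ : Derives L Γ (φ.imp ψ)) (h₂ : Derives L Γ φ) :
    Derives L Γ ψ := by
  obtain ⟨l₁, hl₁, h₁⟩ := h₁
  obtain ⟨l₂, hl₂, h₂⟩ := h₂
  refine ⟨l₁ ++ l₂, by simpa [or_imp, forall_and] using ⟨hl₁, hl₂⟩, ?_⟩
  refine hL.mem_of_tautology₂ h₁ h₂ fun v _ himp => ?_
  simp only [foldr_imp_iff himp, himp, List.mem_append]
  grind

lemma imp_of_insert (hL : IsNormalLogic L) (h : Derives L (insert φ Γ) ψ) :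
    Derives L Γ (φ.imp ψ) := by
  classical
  obtain ⟨l, hl, hψ⟩ := h
  refine ⟨l.filter (· ≠ φ), fun x hx => ?_, ?_⟩
  · obtain ⟨hxl, hxφ⟩ := List.mem_filter.1 hx
    exact (hl x hxl).resolve_left (by simpa using hxφ)
  refine hL.mem_of_tautology hψ fun v _ himp => ?_
  simp only [foldr_imp_iff himp, himp, List.mem_filter]
  intro h hl' hφ
  exact h fun x hx => if hxφ : x = φ then hxφ ▸ hφ else hl' x ⟨hx, by simpa using hxφ⟩

lemma mem_logic_of_empty (h : Derives L ∅ φ) : φ ∈ L := by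
  obtain ⟨l, hl, hφ⟩ := h
  obtain rfl : l = [] := List.eq_nil_iff_forall_not_mem.2 hl
  exact hφ

lemma box (hL : IsNormalLogic L) {i : Fin n} {w : Set (MFormula n)}
    (h : Derives L (boxInv i w) φ) : Derives L w (box i φ) := by
  obtain ⟨l, hl, hφ⟩ := h
  refine ⟨l.map (MFormula.box i), List.forall_mem_map.2 hl, ?_⟩
  exact hL.mp _ _ (hL.box_foldr_imp_mem i l φ) (hL.nec i _ hφ)

end Derives

lemma Consistent.mono {Γ Δ : Set (MFormula n)} (h : Consistent L Δ) (hΓ : Γ ⊆ Δ) :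
    Consistent L Γ :=
  fun hd => h (hd.mono hΓ)

lemma Consistent.insert_or_insert_neg (hL : IsNormalLogic L) {Γ : Set (MFormula n)}
    (hΓ : Consistent L Γ) (φ : MFormula n) :
    Consistent L (insert φ Γ) ∨ Consistent L (insert φ.neg Γ) := by
  by_contra! h
  have hneg : Derives L Γ φ.neg := (not_not.1 h.1).imp_of_insert hL
  have hnegneg : Derives L Γ φ.neg.neg := (not_not.1 h.2).imp_of_insert hL
  exact hΓ (hnegneg.mp hL hneg)

lemma consistent_singleton_neg (hL : IsNormalLogic L) {φ : MFormula n} (hφ : φ ∉ L) :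
    Consistent L {φ.neg} := by
  intro h
  refine hφ (Derives.mem_logic_of_empty ?_)
  have hnn : Derives L ∅ (φ.neg.neg.imp φ) :=
    .of_mem_logic (hL.taut _ fun v _ himp => by simp only [neg, himp]; tauto)
  exact hnn.mp hL ((h.mono (by simp)).imp_of_insert hL)

lemma exists_isMCS_superset (hL : IsNormalLogic L) {Γ : Set (MFormula n)}
    (hΓ : Consistent L Γ) : ∃ w, Γ ⊆ w ∧ IsMCS L w := by
  have hchain : ∀ c ⊆ {Δ | Consistent L Δ}, IsChain (· ⊆ ·) c → c.Nonempty →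
      Consistent L (⋃₀ c) := by
    rintro c hc hchain hne ⟨l, hl, hbot⟩
    obtain ⟨s, hs, hls⟩ := hchain.directedOn.exists_mem_subset_of_finite_of_subset_sUnion hne
      (s := {x | x ∈ l}) l.finite_toSet hl
    exact hc hs ⟨l, hls, hbot⟩
  obtain ⟨w, hΓw, hmax⟩ := zorn_subset_nonempty {Δ | Consistent L Δ}
    (fun c hc hc' hne => ⟨⋃₀ c, hchain c hc hc' hne, fun _ => Set.subset_sUnion_of_mem⟩) Γ hΓ
  exact ⟨w, hΓw, hmax.prop, fun φ => (hmax.prop.insert_or_insert_neg hL φ).imp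
    hmax.mem_of_prop_insert hmax.mem_of_prop_insert⟩

namespace IsMCS

variable (hL : IsNormalLogic L) {w : Set (MFormula n)} (hw : IsMCS L w)
include hL hw

lemma mem_of_derives {φ : MFormula n} (h : Derives L w φ) : φ ∈ w :=
  (hw.mem_or_neg_mem φ).resolve_right fun hneg =>
    hw.consistent ((Derives.of_mem hL hneg).mp hL h)

lemma logic_subset : L ⊆ w := fun _ h => hw.mem_of_derives hL (.of_mem_logic h)

lemma bot_not_mem : bot ∉ w := fun h => hw.consistent (.of_mem hL h)

lemma imp_mem_iff {φ ψ : MFormula n} : φ.imp ψ ∈ w ↔ (φ ∈ w → ψ ∈ w) := by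
  refine ⟨fun h hφ => hw.mem_of_derives hL ((Derives.of_mem hL h).mp hL (.of_mem hL hφ)),
    fun h => hw.mem_of_derives hL ?_⟩
  rcases hw.mem_or_neg_mem φ with hφ | hφ
  · exact (Derives.of_mem_logic (hL.taut _ fun v _ himp => by simp only [himp]; tauto)).mp hL
      (.of_mem hL (h hφ))
  · exact (Derives.of_mem_logic (hL.taut _ fun v hbot himp => by simp only [neg, himp]; tauto)).mp
      hL (.of_mem hL hφ)

lemma consistent_insert_neg_boxInv {i : Fin n} {ψ : MFormula n} (h : box i ψ ∉ w) :
    Consistent L (insert ψ.neg (boxInv i w)) := by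
  intro hd
  have hnn : Derives L (boxInv i w) (ψ.neg.neg.imp ψ) :=
    .of_mem_logic (hL.taut _ fun v _ himp => by simp only [neg, himp]; tauto)
  exact h (hw.mem_of_derives hL ((hnn.mp hL (hd.imp_of_insert hL)).box hL))

end IsMCS

end NormalLogic

def MFormula.encode {n : ℕ} : MFormula n → ℕ
  | prop p => Nat.pair 0 p
  | bot => Nat.pair 1 0
  | imp φ ψ => Nat.pair 2 (Nat.pair φ.encode ψ.encode)
  | box i φ => Nat.pair 3 (Nat.pair i φ.encode)

lemma MFormula.encode_injective {n : ℕ} : Function.Injective (encode : MFormula n → ℕ) := by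
  intro φ
  induction φ with
  | prop p => intro ψ h; cases ψ <;> simp_all [encode, Nat.pair_eq_pair]
  | bot => intro ψ h; cases ψ <;> simp_all [encode, Nat.pair_eq_pair]
  | imp φ₁ φ₂ ih₁ ih₂ =>
    intro ψ h
    cases ψ <;> simp [encode, Nat.pair_eq_pair] at h
    rw [ih₁ h.1, ih₂ h.2]
  | box i φ ih =>
    intro ψ h
    cases ψ <;> simp [encode, Nat.pair_eq_pair] at h
    rw [Fin.ext h.1, ih h.2]

instance {n : ℕ} : Nonempty (MFormula n) := ⟨bot⟩

instance {n : ℕ} : Countable (MFormula n) := MFormula.encode_injective.countable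

lemma exists_surjective_of_infinite (A B : Type) [Infinite A] [Nonempty B] [Countable B] :
    ∃ f : A → B, Function.Surjective f := by
  obtain ⟨g, hg⟩ := exists_surjective_nat B
  exact ⟨g ∘ Function.invFun (Infinite.natEmbedding A),
    hg.comp (Function.invFun_surjective (Infinite.natEmbedding A).injective)⟩

section Canonical

variable {n : ℕ} {L : Set (MFormula n)}

theorem kSat_iff_mem {W : Type} {R : Fin n → W → W → Prop} {T : W → Set (MFormula n)}
    (hL : IsNormalLogic L) (hT : ∀ a, IsMCS L (T a))
    (hR : ∀ i a b, R i a b → boxInv i (T a) ⊆ T b)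
    (hwit : ∀ i a ψ, box i ψ ∉ T a → ∃ b, R i a b ∧ ψ.neg ∈ T b) (φ : MFormula n) (a : W) :
    kSat R (fun p => {a | prop p ∈ T a}) a φ ↔ φ ∈ T a := by
  induction φ generalizing a with
  | prop p => rfl
  | bot => exact ⟨False.elim, (hT a).bot_not_mem hL⟩
  | imp φ ψ ihφ ihψ => simp only [kSat, ihφ, ihψ, (hT a).imp_mem_iff hL]
  | box i φ ih =>
    simp only [kSat, ih]
    refine ⟨fun h => by_contra fun hφ => ?_, fun h b hab => hR i a b hab h⟩
    obtain ⟨b, hab, hneg⟩ := hwit i a φ hφ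
    exact (hT b).bot_not_mem hL (((hT b).imp_mem_iff hL).1 hneg (h b hab))

/-- Since `A` is infinite, the children of a node can be indexed by the formulas `ψ`, the child
for `ψ` refuting `ψ` whenever the node does not contain `□ψ`. -/
theorem exists_isMCS_tree (hL : IsNormalLogic L) {i : Fin n}
    (hser : ∀ w, IsMCS L w → Consistent L (boxInv i w)) (A : Type) [Infinite A]
    {w₀ : Set (MFormula n)} (hw₀ : IsMCS L w₀) :
    ∃ T : List A → Set (MFormula n), T [] = w₀ ∧ (∀ a, IsMCS L (T a)) ∧
      (∀ a x, boxInv i (T a) ⊆ T (a ++ [x])) ∧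
      ∀ a ψ, box i ψ ∉ T a → ∃ x, ψ.neg ∈ T (a ++ [x]) := by
  obtain ⟨e, he⟩ := exists_surjective_of_infinite A (MFormula n)
  have hsucc : ∀ (w : {w // IsMCS L w}) (x : A), ∃ v : {v // IsMCS L v},
      boxInv i w.1 ⊆ v.1 ∧ (box i (e x) ∉ w.1 → (e x).neg ∈ v.1) := by
    rintro ⟨w, hw⟩ x
    by_cases h : box i (e x) ∈ w
    · obtain ⟨v, hwv, hv⟩ := exists_isMCS_superset hL (hser w hw)
      exact ⟨⟨v, hv⟩, hwv, absurd h⟩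
    · obtain ⟨v, hwv, hv⟩ := exists_isMCS_superset hL (hw.consistent_insert_neg_boxInv hL h)
      exact ⟨⟨v, hv⟩, (Set.subset_insert _ _).trans hwv, fun _ => hwv (Set.mem_insert _ _)⟩
  choose next hnext using hsucc
  refine ⟨fun a => (a.foldl next ⟨w₀, hw₀⟩).1, rfl, fun a => (a.foldl next _).2,
    fun a x => by simpa using (hnext _ x).1, fun a ψ hψ => ?_⟩
  obtain ⟨x, rfl⟩ := he ψ
  exact ⟨x, by simpa using (hnext _ x).2 hψ⟩

end Canonical

namespace IsMCS

variable {L : Set (MFormula 1)} (hL : IsNormalLogic L) {w : Set (MFormula 1)} (hw : IsMCS L w)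
include hL hw

lemma consistent_boxInv_of_dAx (hD : dAx ∈ L) : Consistent L (boxInv 0 w) := by
  intro h
  have hDbot : (box 0 bot).imp (box 0 bot.neg).neg ∈ w :=
    hw.logic_subset hL (hL.subst dAx (fun _ => bot) hD)
  have htop : box 0 bot.neg ∈ w := hw.logic_subset hL (hL.nec 0 _ (hL.taut _ fun _ _ himp =>
    (himp _ _).2 id))
  exact hw.bot_not_mem hL <| (hw.imp_mem_iff hL).1
    ((hw.imp_mem_iff hL).1 hDbot (hw.mem_of_derives hL (h.box hL))) htop

lemma boxInv_subset_of_tAx (hT : tAx ∈ L) : boxInv 0 w ⊆ w :=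
  fun φ hφ => (hw.imp_mem_iff hL).1 (hw.logic_subset hL (hL.subst tAx (fun _ => φ) hT)) hφ

lemma boxInv_subset_boxInv_boxInv_of_fourAx (h4 : fourAx ∈ L) :
    boxInv 0 w ⊆ boxInv 0 (boxInv 0 w) :=
  fun φ hφ => (hw.imp_mem_iff hL).1 (hw.logic_subset hL (hL.subst fourAx (fun _ => φ) h4)) hφ

end IsMCS

lemma isPrefix_of_sucRel {A : Type} {a b : List A} (h : sucRel A a b) : a <+: b :=
  let ⟨x, hx⟩ := h
  hx ▸ List.prefix_append a [x]

namespace TreeKind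

def logic : TreeKind → Set (MFormula 1)
  | inn => LogicD
  | rn => LogicT
  | itr => LogicD4
  | rt => LogicS4

lemma isNormalLogic_logic (k : TreeKind) : IsNormalLogic k.logic := by
  cases k <;> exact isNormalLogic_normalClosure _

lemma treeRel_of_sucRel {A : Type} (k : TreeKind) {a b : List A} (h : sucRel A a b) :
    treeRel A k a b := by
  cases k with
  | inn => exact h
  | rn => exact Or.inr h
  | itr => exact .single h
  | rt => exact .single h

lemma isPrefix_of_treeRel {A : Type} (k : TreeKind) (a b : List A) (h : treeRel A k a b) :
    a <+: b := by
  cases k with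
  | inn => exact isPrefix_of_sucRel h
  | rn => exact h.elim (fun h => h ▸ List.prefix_refl a) isPrefix_of_sucRel
  | itr => exact h.trans_induction_on isPrefix_of_sucRel fun _ _ => List.IsPrefix.trans
  | rt =>
    exact h.trans_induction_on List.prefix_refl isPrefix_of_sucRel fun _ _ => List.IsPrefix.trans

lemma consistent_boxInv (k : TreeKind) {w : Set (MFormula 1)} (hw : IsMCS k.logic w) :
    Consistent k.logic (boxInv 0 w) := by
  have hL := k.isNormalLogic_logic
  cases k with
  | inn => exact hw.consistent_boxInv_of_dAx hL dAx_mem_logicD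
  | rn => exact hw.consistent.mono (hw.boxInv_subset_of_tAx hL tAx_mem_logicT)
  | itr => exact hw.consistent_boxInv_of_dAx hL dAx_mem_logicD4
  | rt =>
    exact hw.consistent.mono (hw.boxInv_subset_of_tAx hL tAx_mem_logicS4)

lemma boxInv_subset_of_treeRel {A : Type} (k : TreeKind) {T : List A → Set (MFormula 1)}
    (hT : ∀ a, IsMCS k.logic (T a)) (hstep : ∀ a x, boxInv 0 (T a) ⊆ T (a ++ [x]))
    {a b : List A} (hab : treeRel A k a b) : boxInv 0 (T a) ⊆ T b := by
  have hL := k.isNormalLogic_logic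
  have hsuc : ∀ {a b}, sucRel A a b → boxInv 0 (T a) ⊆ T b := by
    rintro a _ ⟨x, rfl⟩
    exact hstep a x
  have hrefl (hT' : tAx ∈ k.logic) (a : List A) : boxInv 0 (T a) ⊆ T a :=
    (hT a).boxInv_subset_of_tAx hL hT'
  have htrans (h4 : fourAx ∈ k.logic) {a b c : List A} (hab : boxInv 0 (T a) ⊆ T b)
      (hbc : boxInv 0 (T b) ⊆ T c) : boxInv 0 (T a) ⊆ T c :=
    fun _ hφ => hbc (hab ((hT a).boxInv_subset_boxInv_boxInv_of_fourAx hL h4 hφ))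
  cases k with
  | inn => exact hsuc hab
  | rn =>
    rcases hab with rfl | hab
    exacts [hrefl tAx_mem_logicT a, hsuc hab]
  | itr => exact hab.trans_induction_on hsuc fun _ _ => htrans fourAx_mem_logicD4
  | rt =>
    exact hab.trans_induction_on (hrefl tAx_mem_logicS4) hsuc
      fun _ _ => htrans fourAx_mem_logicS4

theorem kLog_treeRel_subset (A : Type) [Infinite A] (k : TreeKind) :
    KLog (treeRel A k) ⊆ k.logic := by
  intro φ hφ
  by_contra hφL
  have hL := k.isNormalLogic_logic
  obtain ⟨w₀, hw₀φ, hw₀⟩ := exists_isMCS_superset hL (consistent_singleton_neg hL hφL)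
  obtain ⟨T, hT₀, hT, hstep, hwit⟩ := exists_isMCS_tree hL (fun _ => k.consistent_boxInv) A hw₀
  have htruth := kSat_iff_mem (R := fun _ => treeRel A k) hL hT
    (Fin.forall_fin_one.2 fun _ _ => k.boxInv_subset_of_treeRel hT hstep)
    (Fin.forall_fin_one.2 fun a ψ h =>
      let ⟨x, hx⟩ := hwit a ψ h; ⟨a ++ [x], k.treeRel_of_sucRel ⟨x, rfl⟩, hx⟩) φ []
  have hφw₀ : φ ∈ w₀ := hT₀ ▸ htruth.1 (hφ _ [])
  exact hw₀.bot_not_mem hL ((hw₀.imp_mem_iff hL).1 (hw₀φ rfl) hφw₀)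

end TreeKind

section Neighborhood

variable {n : ℕ} {X : Type}

lemma nSat_subst (τ : Fin n → X → Filter X) (V : ℕ → Set X) (s : ℕ → MFormula n)
    (φ : MFormula n) (x : X) :
    nSat τ V x (φ.subst s) ↔ nSat τ (fun p => {y | nSat τ V y (s p)}) x φ := by
  induction φ generalizing x with
  | prop p => rfl
  | bot => rfl
  | imp φ ψ ihφ ihψ => exact imp_congr (ihφ x) (ihψ x)
  | box i φ ih =>
    change {y | nSat τ V y (φ.subst s)} ∈ τ i x ↔ _
    simp only [ih]
    rfl

lemma isNormalLogic_nLogn [Nonempty X] (τ : Fin n → X → Filter X) :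
    IsNormalLogic (NLogn τ) where
  taut _ h V x := h (nSat τ V x) id fun _ _ => Iff.rfl
  kax _ _ _ _ _ h₁ h₂ := Filter.mp_mem h₂ (Filter.mem_of_superset h₁ fun _ hpq hp => hpq hp)
  mp _ _ h₁ h₂ V x := h₁ V x (h₂ V x)
  subst φ s h V x := (nSat_subst τ V s φ x).2 (h _ x)
  nec _ _ h V _ := Filter.univ_mem' fun y => h V y

lemma nSat_preimage_iff_kSat {W : Type} (τ : Fin n → X → Filter X) (R : Fin n → W → W → Prop)
    (f : X → W) (hf : ∀ i x (S : Set W), f ⁻¹' S ∈ τ i x ↔ ∀ b, R i (f x) b → b ∈ S)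
    (V : ℕ → Set W) (φ : MFormula n) (x : X) :
    nSat τ (fun p => f ⁻¹' V p) x φ ↔ kSat R V (f x) φ := by
  induction φ generalizing x with
  | prop p => rfl
  | bot => rfl
  | imp φ ψ ihφ ihψ => exact imp_congr (ihφ x) (ihψ x)
  | box i φ ih =>
    change {y | nSat τ _ y φ} ∈ τ i x ↔ _
    simp only [ih]
    exact hf i x {b | kSat R V b φ}

lemma nLogn_subset_kLogn [Nonempty X] {W : Type} [Nonempty W] {τ : Fin n → X → Filter X}
    {R : Fin n → W → W → Prop} {f : X → W} (hsurj : Function.Surjective f)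
    (hf : ∀ i x (S : Set W), f ⁻¹' S ∈ τ i x ↔ ∀ b, R i (f x) b → b ∈ S) :
    NLogn τ ⊆ KLogn R := by
  intro φ hφ V b
  obtain ⟨x, rfl⟩ := hsurj b
  exact (nSat_preimage_iff_kSat τ R f hf V φ x).1 (hφ _ x)

variable [Nonempty X] (τ : X → Filter X)

lemma dAx_mem_nLog (h : ∀ x, (τ x).NeBot) : dAx ∈ NLog τ := fun _ x h₁ h₂ =>
  haveI := h x
  let ⟨_, hy, hny⟩ := (Filter.Eventually.and h₁ h₂).exists
  hny hy

lemma tAx_mem_nLog (h : ∀ x, pure x ≤ τ x) : tAx ∈ NLog τ := fun _ x hx => h x hx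

lemma fourAx_mem_nLog (h : ∀ x, ∀ S ∈ τ x, {y | S ∈ τ y} ∈ τ x) : fourAx ∈ NLog τ :=
  fun _ x hx => h x _ hx

end Neighborhood

namespace PSeq

variable {A : Type}

lemma none_of_st_le (α : PSeq A) {k : ℕ} (hk : α.st ≤ k) : α.1 k = none :=
  Nat.sInf_mem (s := {N | ∀ k ≥ N, α.1 k = none}) α.2 k hk

lemma st_le (α : PSeq A) {N : ℕ} (h : ∀ k ≥ N, α.1 k = none) : α.st ≤ N := Nat.sInf_le h

lemma forget_eq_of_st_le (α : PSeq A) {m : ℕ} (hm : α.st ≤ m) :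
    α.forget = ((List.range m).map α.1).reduceOption := by
  induction m, hm using Nat.le_induction with
  | base => rfl
  | succ m hm ih => simp [List.range_succ, List.reduceOption_append, ih, α.none_of_st_le hm]

def ofList (l : List (Option A)) : PSeq A :=
  ⟨fun i => l.getD i none, l.length, fun _ hk => List.getD_eq_default _ _ hk⟩

lemma forget_ofList (l : List (Option A)) : (ofList l).forget = l.reduceOption := by
  rw [forget_eq_of_st_le _ (st_le _ fun _ hk => List.getD_eq_default _ _ hk)]
  congr 1
  refine List.ext_getElem (by simp) fun i _ hi => ?_
  rw [List.getElem_map, List.getElem_range]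
  exact List.getD_eq_getElem _ _ hi

lemma reduceOption_map_some (l : List A) : (l.map some).reduceOption = l := by
  simp [List.reduceOption]

lemma forget_surjective : Function.Surjective (forget : PSeq A → List A) :=
  fun b => ⟨ofList (b.map some), by rw [forget_ofList, reduceOption_map_some]⟩

end PSeq

section NOmega

variable {A : Type} {R : List A → List A → Prop}

lemma exists_mem_unbhd_forget_eq (hR : ∀ a b, R a b → a <+: b) (α : PSeq A) (k : ℕ)
    {b : List A} (hb : R α.forget b) : ∃ β ∈ Unbhd R k α, β.forget = b := by
  obtain ⟨z, rfl⟩ := hR _ _ hb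
  set l := (List.range (max k α.st)).map α.1
  have hforget : (PSeq.ofList (l ++ z.map some)).forget = α.forget ++ z := by
    rw [PSeq.forget_ofList, List.reduceOption_append, PSeq.reduceOption_map_some,
      ← α.forget_eq_of_st_le (le_max_right _ _)]
  refine ⟨PSeq.ofList (l ++ z.map some), ⟨fun i hi => ?_, hforget ▸ hb⟩, hforget⟩
  have hil : i < l.length := by simpa [l] using hi
  change α.1 i = (l ++ z.map some).getD i none
  rw [List.getD_append _ _ _ _ hil, List.getD_eq_getElem _ _ hil]
  simp [l]

lemma nOmega_hasBasis (R : List A → List A → Prop) (α : PSeq A) :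
    (nOmega R α).HasBasis (fun _ => True) (Unbhd R · α) :=
  Filter.hasBasis_iInf_principal <| Antitone.directed_ge fun _ _ hkk' _ hβ =>
    ⟨fun i hi => hβ.1 i (hi.trans_le (max_le_max_right _ hkk')), hβ.2⟩

lemma preimage_forget_mem_nOmega_iff (hR : ∀ a b, R a b → a <+: b) (α : PSeq A)
    (S : Set (List A)) : PSeq.forget ⁻¹' S ∈ nOmega R α ↔ ∀ b, R α.forget b → b ∈ S := by
  rw [(nOmega_hasBasis R α).mem_iff]
  refine ⟨fun ⟨k, _, hk⟩ b hb => ?_, fun h => ⟨0, trivial, fun β hβ => h _ hβ.2⟩⟩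
  obtain ⟨β, hβ, rfl⟩ := exists_mem_unbhd_forget_eq hR α k hb
  exact hk hβ

lemma nOmega_neBot (hR : ∀ a b, R a b → a <+: b) (hser : ∀ a, ∃ b, R a b) (α : PSeq A) :
    (nOmega R α).NeBot :=
  (nOmega_hasBasis R α).neBot_iff.2 fun {k} _ =>
    let ⟨_, hb⟩ := hser α.forget
    let ⟨β, hβ, _⟩ := exists_mem_unbhd_forget_eq hR α k hb
    ⟨β, hβ⟩

lemma pure_le_nOmega (hrefl : ∀ a, R a a) (α : PSeq A) : pure α ≤ nOmega R α :=
  (nOmega_hasBasis R α).ge_iff.2 fun _ _ => Filter.mem_pure.2 ⟨fun _ _ => rfl, hrefl _⟩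

lemma setOf_mem_nOmega_mem_nOmega (htrans : ∀ a b c, R a b → R b c → R a c) {α : PSeq A}
    {S : Set (PSeq A)} (hS : S ∈ nOmega R α) : {β | S ∈ nOmega R β} ∈ nOmega R α := by
  obtain ⟨k, -, hk⟩ := (nOmega_hasBasis R α).mem_iff.1 hS
  refine (nOmega_hasBasis R α).mem_iff.2 ⟨k, trivial, fun β hβ => ?_⟩
  refine (nOmega_hasBasis R β).mem_iff.2 ⟨max k α.st, trivial, fun γ hγ => hk ⟨fun i hi => ?_,
    htrans _ _ _ hβ.2 hγ.2⟩⟩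
  exact (hβ.1 i hi).trans (hγ.1 i (hi.trans_le (le_max_left _ _)))

lemma nLog_nOmega_subset_kLog (hR : ∀ a b, R a b → a <+: b) : NLog (nOmega R) ⊆ KLog R :=
  nLogn_subset_kLogn PSeq.forget_surjective fun _ => preimage_forget_mem_nOmega_iff hR

end NOmega

namespace TreeKind

theorem logic_subset_nLog (A : Type) [Nonempty A] (k : TreeKind) :
    k.logic ⊆ NLog (nOmega (treeRel A k)) := by
  have hN := isNormalLogic_nLogn fun _ : Fin 1 => nOmega (treeRel A k)
  have hD : dAx ∈ NLog (nOmega (treeRel A k)) :=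
    dAx_mem_nLog _ <| nOmega_neBot k.isPrefix_of_treeRel
      fun a => ⟨_, k.treeRel_of_sucRel ⟨Classical.arbitrary A, rfl⟩⟩
  have hT (hrefl : ∀ a, treeRel A k a a) : tAx ∈ NLog (nOmega (treeRel A k)) :=
    tAx_mem_nLog _ (pure_le_nOmega hrefl)
  have h4 (htrans : ∀ a b c, treeRel A k a b → treeRel A k b c → treeRel A k a c) :
      fourAx ∈ NLog (nOmega (treeRel A k)) :=
    fourAx_mem_nLog _ fun _ _ => setOf_mem_nOmega_mem_nOmega htrans
  cases k with
  | inn => exact normalClosure_union_singleton_subset hN (logicK_subset hN) hD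
  | rn => exact normalClosure_union_singleton_subset hN (logicK_subset hN) (hT fun _ => .inl rfl)
  | itr =>
    exact normalClosure_union_singleton_subset hN
      (normalClosure_union_singleton_subset hN (logicK_subset hN) hD)
      (h4 fun _ _ _ => Relation.TransGen.trans)
  | rt =>
    exact normalClosure_union_singleton_subset hN
      (normalClosure_union_singleton_subset hN (logicK_subset hN) (hT fun _ => .refl))
      (h4 fun _ _ _ => Relation.ReflTransGen.trans)

end TreeKind

theorem log_nOmega_frames_general (A : Type) [Infinite A] :
    NLog (nOmega (treeRel A .inn)) = LogicD ∧
    NLog (nOmega (treeRel A .rn)) = LogicT ∧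
    NLog (nOmega (treeRel A .itr)) = LogicD4 ∧
    NLog (nOmega (treeRel A .rt)) = LogicS4 := by
  have key (k : TreeKind) : NLog (nOmega (treeRel A k)) = k.logic :=
    ((nLog_nOmega_subset_kLog k.isPrefix_of_treeRel).trans (k.kLog_treeRel_subset A)).antisymm
      (k.logic_subset_nLog A)
  exact ⟨key .inn, key .rn, key .itr, key .rt⟩

/-- For the tree frames over a countably infinite alphabet:
`Log(N_ω(F_in)) = D`, `Log(N_ω(F_rn)) = T`, `Log(N_ω(F_it)) = D4`,
`Log(N_ω(F_rt)) = S4`. -/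
theorem log_nOmega_frames (A : Type) [Countable A] [Infinite A] :
    NLog (nOmega (treeRel A .inn)) = LogicD ∧
    NLog (nOmega (treeRel A .rn)) = LogicT ∧
    NLog (nOmega (treeRel A .itr)) = LogicD4 ∧
    NLog (nOmega (treeRel A .rt)) = LogicS4 :=
  log_nOmega_frames_general A
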